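/- arXiv:1703.08131 — 4 statements merged into one kernel-verified Lean document; each statement's English description precedes it below -/
import Mathlib

section
/- For a shift-invariant positive definite kernel κ on ℝ^d with Fourier transform p(ω) (a probability density by Bochner's theorem), defining z_{ω,b}(x) = √2·cos(ωᵀx + b), one has κ(x − y) = E_{ω,b}[z_{ω,b}(x)·z_{ω,b}(y)], where ω is drawn from p and b uniformly from [0, 2π]. -/
/-!
Averaging over the uniform phase `b` kills the oscillating term in the product-to-sum formula
`2 cos (θ + b) cos (φ + b) = cos (θ - φ) + cos (θ + φ + 2b)`, so the `b`-average of
`z_{ω,b}(x) z_{ω,b}(y)` is `cos ⟪ω, x - y⟫`; integrating against `p` is then exactly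
Bochner's representation of `κ (x - y)`.
-/

open MeasureTheory Real

lemma integral_cos_add_two_mul (c : ℝ) : ∫ b in (0:ℝ)..(2 * π), cos (c + 2 * b) = 0 := by
  rw [intervalIntegral.integral_comp_add_mul (fun t => cos t) two_ne_zero, integral_cos]
  simp [show c + 2 * (2 * π) = c + 2 * π + 2 * π by ring]

lemma sqrt_two_mul_cos_mul_sqrt_two_mul_cos (θ φ b : ℝ) :
    (√2 * cos (θ + b)) * (√2 * cos (φ + b)) = cos (θ - φ) + cos (θ + φ + 2 * b) := by
  rw [show θ - φ = (θ + b) - (φ + b) by ring, show θ + φ + 2 * b = (θ + b) + (φ + b) by ring,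
    cos_sub (θ + b), cos_add (θ + b)]
  linear_combination (cos (θ + b) * cos (φ + b)) * mul_self_sqrt (zero_le_two (α := ℝ))

lemma integral_sqrt_two_mul_cos_mul_sqrt_two_mul_cos (θ φ : ℝ) :
    ∫ b in (0:ℝ)..(2 * π), (√2 * cos (θ + b)) * (√2 * cos (φ + b)) = 2 * π * cos (θ - φ) := by
  simp_rw [sqrt_two_mul_cos_mul_sqrt_two_mul_cos]
  rw [intervalIntegral.integral_add intervalIntegrable_const
      ((by fun_prop : Continuous fun b => cos (θ + φ + 2 * b)).intervalIntegrable _ _),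
    integral_cos_add_two_mul, intervalIntegral.integral_const, smul_eq_mul]
  ring

theorem stmt0_general (d : ℕ) (κ : EuclideanSpace ℝ (Fin d) → ℝ)
    (p : EuclideanSpace ℝ (Fin d) → ℝ)
    (hBochner : ∀ δ, κ δ = ∫ ω, p ω * Real.cos (inner ℝ ω δ)) :
    ∀ x y : EuclideanSpace ℝ (Fin d),
      κ (x - y) =
        ∫ ω, p ω * ((2 * π)⁻¹ *
          ∫ b in (0:ℝ)..(2 * π),
            (Real.sqrt 2 * Real.cos (inner ℝ ω x + b)) *
            (Real.sqrt 2 * Real.cos (inner ℝ ω y + b))) := by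
  intro x y
  have hπ : 2 * π ≠ 0 := by positivity
  simp_rw [hBochner, integral_sqrt_two_mul_cos_mul_sqrt_two_mul_cos, ← inner_sub_right,
    inv_mul_cancel_left₀ hπ]

/-- **Random Fourier features identity.** If a continuous shift-invariant kernel `κ` on `ℝ^d`
with `κ 0 = 1` has a (Bochner) representation via a probability density `p`, i.e.
`κ δ = ∫ ω, p ω * cos (⟪ω, δ⟫)`, then for `z_{ω,b}(x) = √2 cos(ωᵀx + b)` we have
`κ (x - y) = E_{ω,b}[z_{ω,b}(x) z_{ω,b}(y)]`, where `ω ∼ p` and `b` is uniform on `[0, 2π]`. -/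
theorem stmt0 (d : ℕ) (κ : EuclideanSpace ℝ (Fin d) → ℝ)
    (p : EuclideanSpace ℝ (Fin d) → ℝ)
    (hκcont : Continuous κ) (hκ0 : κ 0 = 1)
    (hp_nonneg : ∀ ω, 0 ≤ p ω) (hp_prob : ∫ ω, p ω = 1)
    (hBochner : ∀ δ, κ δ = ∫ ω, p ω * Real.cos (inner ℝ ω δ)) :
    ∀ x y : EuclideanSpace ℝ (Fin d),
      κ (x - y) =
        ∫ ω, p ω * ((2 * π)⁻¹ *
          ∫ b in (0:ℝ)..(2 * π),
            (Real.sqrt 2 * Real.cos (inner ℝ ω x + b)) *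
            (Real.sqrt 2 * Real.cos (inner ℝ ω y + b))) :=
  stmt0_general d κ p hBochner
end

section
/- Consider iterates θ̲_{n+1} = 𝐀 θ̲_n + r̲_n in ℝ^{KD} with 𝐀 = X + BBᵀ, ‖X‖ < 1, X·BBᵀ = BBᵀ·X = BBᵀ − BBᵀ (i.e., (I−BBᵀ)𝐀 = X(I−BBᵀ)) and r̲_n → 0. Then ‖(I_{KD} − BBᵀ) θ̲_{n+1}‖ → 0 as n → ∞; i.e., the iterates asymptotically approach the consensus subspace. -/
open Filter Topology

/-!
Writing `Q = I − P`, the commutation relation turns the iteration into the perturbed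
contraction `Q θ (n+1) = X (Q θ n) + Q (r n)`. Hence `‖Q θ n‖` satisfies
`u (n+1) ≤ ‖X‖ u n + b n` with `b n → 0`, and such sequences tend to `0`.
-/

lemma tendsto_zero_of_le_mul_add {u b : ℕ → ℝ} {c : ℝ} (hc0 : 0 ≤ c) (hc1 : c < 1)
    (hu : ∀ n, 0 ≤ u n) (hrec : ∀ n, u (n + 1) ≤ c * u n + b n)
    (hb : Tendsto b atTop (𝓝 0)) : Tendsto u atTop (𝓝 0) := by
  refine tendsto_order.2 ⟨fun a ha => .of_forall fun n => ha.trans_le (hu n), fun ε hε => ?_⟩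
  obtain ⟨N, hN⟩ :=
    (hb.eventually (ge_mem_nhds (by positivity : 0 < (1 - c) * (ε / 2)))).exists_forall_of_atTop
  -- Once `b n ≤ (1 - c) ε / 2`, the excess `u n - ε / 2` decays geometrically.
  have hgeom : ∀ m, u (N + m) - ε / 2 ≤ c ^ m * (u N - ε / 2) := fun m =>
    le_geom (u := fun m => u (N + m) - ε / 2) hc0 m fun k _ => by
      change u (N + k + 1) - ε / 2 ≤ c * (u (N + k) - ε / 2)
      have := hN (N + k) (Nat.le_add_right N k)
      linarith [hrec (N + k)]
  have hpow : Tendsto (fun m => c ^ m * (u N - ε / 2)) atTop (𝓝 0) := by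
    simpa using (tendsto_pow_atTop_nhds_zero_of_lt_one hc0 hc1).mul_const (u N - ε / 2)
  obtain ⟨M, hM⟩ :=
    (hpow.eventually (gt_mem_nhds (by positivity : 0 < ε / 2))).exists_forall_of_atTop
  refine eventually_atTop.2 ⟨N + M, fun n hn => ?_⟩
  obtain ⟨m, rfl⟩ := Nat.exists_eq_add_of_le (le_of_add_le_left hn)
  linarith [hgeom m, hM m (by omega)]

lemma tendsto_zero_of_iterate_add {𝕜 E : Type*} [NontriviallyNormedField 𝕜]
    [SeminormedAddCommGroup E] [NormedSpace 𝕜 E] {X : E →L[𝕜] E} (hX : ‖X‖ < 1)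
    {y s : ℕ → E} (hiter : ∀ n, y (n + 1) = X (y n) + s n)
    (hs : Tendsto (fun n => ‖s n‖) atTop (𝓝 0)) : Tendsto (fun n => ‖y n‖) atTop (𝓝 0) :=
  tendsto_zero_of_le_mul_add (norm_nonneg X) hX (fun _ => norm_nonneg _)
    (fun n => (hiter n ▸ norm_add_le _ _).trans (add_le_add_left (X.le_opNorm _) _)) hs

theorem stmt7_general {K D : ℕ}
    (X P : EuclideanSpace ℝ (Fin K × Fin D) →L[ℝ] EuclideanSpace ℝ (Fin K × Fin D))
    (hX : ‖X‖ < 1)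
    (hcomm : (ContinuousLinearMap.id ℝ _ - P) ∘L (X + P) = X ∘L (ContinuousLinearMap.id ℝ _ - P))
    (θ r : ℕ → EuclideanSpace ℝ (Fin K × Fin D))
    (hiter : ∀ n, θ (n + 1) = (X + P) (θ n) + r n)
    (hr : Tendsto (fun n => ‖r n‖) atTop (𝓝 0)) :
    Tendsto (fun n => ‖θ (n + 1) - P (θ (n + 1))‖) atTop (𝓝 0) := by
  let Q := ContinuousLinearMap.id ℝ (EuclideanSpace ℝ (Fin K × Fin D)) - P
  have hstep : ∀ n, Q (θ (n + 1)) = X (Q (θ n)) + Q (r n) := fun n => by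
    rw [hiter n, map_add, ← ContinuousLinearMap.comp_apply, hcomm, ContinuousLinearMap.comp_apply]
  have hQr : Tendsto (fun n => ‖Q (r n)‖) atTop (𝓝 0) :=
    squeeze_zero (fun _ => norm_nonneg _) (fun n => Q.le_opNorm (r n))
      (by simpa using hr.const_mul ‖Q‖)
  have hQθ : Tendsto (fun n => ‖Q (θ n)‖) atTop (𝓝 0) :=
    tendsto_zero_of_iterate_add hX hstep hQr
  exact (tendsto_add_atTop_iff_nat 1).mpr hQθ

/-- **Asymptotic approach to the consensus subspace.** Let `𝐀 = X + P` act on `ℝ^{KD}`,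
where `P` is the orthogonal projection onto the consensus subspace (symmetric, idempotent),
`‖X‖ < 1`, `(I − P) ∘ 𝐀 = X ∘ (I − P)`, and consider iterates `θ (n+1) = 𝐀 (θ n) + r n`
with `‖r n‖ → 0`. Then `‖(I − P) (θ (n+1))‖ → 0`. -/
theorem stmt7 {K D : ℕ}
    (X P : EuclideanSpace ℝ (Fin K × Fin D) →L[ℝ] EuclideanSpace ℝ (Fin K × Fin D))
    (hPsym : ∀ u v, inner ℝ (P u) v = (inner ℝ u (P v) : ℝ))
    (hPidem : P ∘L P = P)
    (hX : ‖X‖ < 1)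
    (hcomm : (ContinuousLinearMap.id ℝ _ - P) ∘L (X + P) = X ∘L (ContinuousLinearMap.id ℝ _ - P))
    (θ r : ℕ → EuclideanSpace ℝ (Fin K × Fin D))
    (hiter : ∀ n, θ (n + 1) = (X + P) (θ n) + r n)
    (hr : Tendsto (fun n => ‖r n‖) atTop (𝓝 0)) :
    Tendsto (fun n => ‖θ (n + 1) - P (θ (n + 1))‖) atTop (𝓝 0) :=
  stmt7_general X P hX hcomm θ r hiter hr
end

section
/- The functions x ↦ cos(ωᵢᵀx + bᵢ), i = 1,…,D, on ℝ^d are linearly independent over ℝ provided ωᵢ ≠ ±ω_j for i ≠ j and, whenever ωᵢ = 0, cos(bᵢ) ≠ 0: that is, if Σ_{i=1}^D cᵢ cos(ωᵢᵀx + bᵢ) = 0 for all x ∈ ℝ^d, then c = 0. -/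
/-!
Writing `cos (θ + b) = (e^{ib} e^{iθ} + e^{-ib} e^{-iθ}) / 2` turns the relation into a vanishing
linear combination of the characters `x ↦ exp (i ⟪w, x⟫)` of `ℝ^d`, with `w` ranging over the
`±ωᵢ`. Distinct `w` give distinct characters, and distinct characters are linearly independent
(Artin), so the total coefficient at each `ωᵢ` vanishes. As `ωᵢ ≠ ±ω_j`, that coefficient is
`cᵢ e^{ibᵢ} / 2` when `ωᵢ ≠ 0` and `cᵢ cos bᵢ` when `ωᵢ = 0`.
-/

open Complex

section ExpInnerChar

variable {E : Type*} [NormedAddCommGroup E] [InnerProductSpace ℝ E]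

noncomputable def expInnerChar (w : E) : Multiplicative E →* ℂ where
  toFun x := exp ((inner ℝ w x.toAdd : ℝ) * I)
  map_one' := by simp
  map_mul' x y := by
    simp only [toAdd_mul, inner_add_right, ofReal_add, add_mul, exp_add]

lemma expInnerChar_apply (w : E) (x : Multiplicative E) :
    expInnerChar w x = exp ((inner ℝ w x.toAdd : ℝ) * I) := rfl

lemma eq_zero_of_forall_exp_inner_mul_I_eq_one {v : E}
    (h : ∀ x : E, exp ((inner ℝ v x : ℝ) * I) = 1) : v = 0 := by
  by_contra hv
  have hpi : (inner ℝ v ((Real.pi / ‖v‖ ^ 2) • v) : ℝ) = Real.pi := by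
    rw [real_inner_smul_right, real_inner_self_eq_norm_sq]
    field_simp
  have := h ((Real.pi / ‖v‖ ^ 2) • v)
  rw [hpi, exp_pi_mul_I] at this
  norm_num at this

lemma expInnerChar_injective : Function.Injective (expInnerChar (E := E)) := by
  intro w w' h
  rw [← sub_eq_zero]
  refine eq_zero_of_forall_exp_inner_mul_I_eq_one fun x => ?_
  have hx := DFunLike.congr_fun h (Multiplicative.ofAdd x)
  simp only [expInnerChar_apply, toAdd_ofAdd] at hx
  rw [inner_sub_left, ofReal_sub, sub_mul, exp_sub, hx, div_self (exp_ne_zero _)]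

lemma linearIndependent_expInnerChar :
    LinearIndependent ℂ (fun w : E => ⇑(expInnerChar w)) :=
  (linearIndependent_monoidHom (Multiplicative E) ℂ).comp _ expInnerChar_injective

end ExpInnerChar

lemma LinearIndependent.sum_ite_eq_zero {ι κ R M : Type*} [Ring R] [AddCommGroup M] [Module R M]
    [DecidableEq ι] {v : ι → M} (hv : LinearIndependent R v) {s : Finset κ} {g : κ → ι}
    {f : κ → R} (h : ∑ k ∈ s, f k • v (g k) = 0) (i : ι) :
    ∑ k ∈ s, (if g k = i then f k else 0) = 0 := by
  have hfiber : ∑ j ∈ s.image g, (∑ k ∈ s with g k = j, f k) • v j = 0 := by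
    rw [← h, ← Finset.sum_fiberwise_of_maps_to (fun k hk => Finset.mem_image_of_mem g hk)]
    refine Finset.sum_congr rfl fun j _ => ?_
    rw [Finset.sum_smul]
    exact Finset.sum_congr rfl fun k hk => by rw [(Finset.mem_filter.mp hk).2]
  rw [← Finset.sum_filter]
  by_cases hi : i ∈ s.image g
  · exact linearIndependent_iff'.mp hv _ _ hfiber i hi
  · refine Finset.sum_eq_zero fun k hk => absurd ?_ hi
    rw [← (Finset.mem_filter.mp hk).2]
    exact Finset.mem_image_of_mem g (Finset.mem_filter.mp hk).1

lemma ofReal_mul_cos_add (c θ b : ℝ) :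
    ((c * Real.cos (θ + b) : ℝ) : ℂ) =
      c * exp (b * I) / 2 * exp (θ * I) + c * exp (-b * I) / 2 * exp (-θ * I) := by
  rw [ofReal_mul, ofReal_cos, cos, show ((θ + b : ℝ) : ℂ) * I = b * I + θ * I by push_cast; ring,
    show -((θ + b : ℝ) : ℂ) * I = -b * I + -θ * I by push_cast; ring, exp_add, exp_add]
  ring

lemma sum_exp_coeff_eq_zero_of_sum_cos_eq_zero {ι E : Type*} [Fintype ι]
    [NormedAddCommGroup E] [InnerProductSpace ℝ E] [DecidableEq E]
    (ω : ι → E) (b c : ι → ℝ)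
    (hzero : ∀ x : E, ∑ i, c i * Real.cos ((inner ℝ (ω i) x : ℝ) + b i) = 0) (w : E) :
    ∑ i, (if ω i = w then (c i : ℂ) * exp (b i * I) / 2 else 0) +
      ∑ i, (if -ω i = w then (c i : ℂ) * exp (-b i * I) / 2 else 0) = 0 := by
  set a : ι → ℂ := fun i => c i * exp (b i * I) / 2
  set a' : ι → ℂ := fun i => c i * exp (-b i * I) / 2
  have hchar : ∑ k : ι ⊕ ι,
      Sum.elim a a' k • ⇑(expInnerChar (Sum.elim ω (fun i => -ω i) k)) = 0 := by
    funext x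
    have hx : ∑ i, ((c i * Real.cos ((inner ℝ (ω i) x.toAdd : ℝ) + b i) : ℝ) : ℂ) = 0 := by
      exact_mod_cast hzero x.toAdd
    rw [Finset.sum_apply, Fintype.sum_sum_type, ← Finset.sum_add_distrib, Pi.zero_apply, ← hx]
    refine Finset.sum_congr rfl fun i _ => ?_
    simp only [Pi.smul_apply, Sum.elim_inl, Sum.elim_inr, smul_eq_mul,
      expInnerChar_apply, inner_neg_left, ofReal_neg, neg_mul, ofReal_mul_cos_add, a, a']
  have hcoeff := linearIndependent_expInnerChar.sum_ite_eq_zero hchar w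
  rwa [Fintype.sum_sum_type] at hcoeff

/-- **Linear independence of shifted cosines.** If `ωᵢ ≠ ±ω_j` for `i ≠ j` and
`cos(bᵢ) ≠ 0` whenever `ωᵢ = 0`, then `Σᵢ cᵢ cos(ωᵢᵀx + bᵢ) = 0` for all `x ∈ ℝ^d`
implies `c = 0`. -/
theorem stmt14 {d D : ℕ}
    (ω : Fin D → EuclideanSpace ℝ (Fin d)) (b : Fin D → ℝ) (c : Fin D → ℝ)
    (hω : ∀ i j, i ≠ j → ω i ≠ ω j ∧ ω i ≠ -ω j)
    (hb : ∀ i, ω i = 0 → Real.cos (b i) ≠ 0)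
    (hzero : ∀ x : EuclideanSpace ℝ (Fin d),
      ∑ i, c i * Real.cos ((inner ℝ (ω i) x : ℝ) + b i) = 0) :
    c = 0 := by
  classical
  funext i
  have hcoeff := sum_exp_coeff_eq_zero_of_sum_cos_eq_zero ω b c hzero (ω i)
  have heq_ωi : ∀ j, ω j = ω i ↔ j = i := fun j =>
    ⟨fun h => by_contra fun hji => (hω j i hji).1 h, fun h => h ▸ rfl⟩
  simp only [heq_ωi, Finset.sum_ite_eq', Finset.mem_univ, if_true] at hcoeff
  by_cases h0 : ω i = 0
  · have hneg_eq_ωi : ∀ j, -ω j = ω i ↔ j = i := fun j => by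
      rw [h0, neg_eq_zero, ← h0, heq_ωi]
    simp only [hneg_eq_ωi, Finset.sum_ite_eq', Finset.mem_univ, if_true] at hcoeff
    have hcos : ((c i * Real.cos (0 + b i) : ℝ) : ℂ) = 0 := by
      rw [ofReal_mul_cos_add]
      simpa using hcoeff
    rw [zero_add] at hcos
    exact (mul_eq_zero.mp (by exact_mod_cast hcos)).resolve_right (hb i h0)
  · have hneg_eq_ωi : ∀ j, -ω j ≠ ω i := fun j hj => by
      rcases eq_or_ne j i with rfl | hji
      · exact h0 (by simpa [neg_eq_iff_add_eq_zero, ← two_smul ℝ] using hj)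
      · exact (hω i j hji.symm).2 hj.symm
    simp only [hneg_eq_ωi, if_false, Finset.sum_const_zero, add_zero] at hcoeff
    simpa [exp_ne_zero] using hcoeff
end

section
/- Consider the matrix recursion B_n = A·B_{n−1}·Aᵀ − μ·A·B_{n−1}·Aᵀ·R − μ·R·A·B_{n−1}·Aᵀ + μ²σ²R on symmetric m×m matrices. Its vectorization satisfies vec(B_n) = (I_{m²} − μ(R ⊗ I_m + I_m ⊗ R))(A ⊗ A)·vec(B_{n−1}) + μ²σ²·vec(R); hence the recursion converges (for any initial B_0) if the spectral radius of (I_{m²} − μ(R ⊗ I_m + I_m ⊗ R))(A ⊗ A) is strictly less than 1. -/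
/-!
Vectorizing with `vec (D C Eᵀ) = (E ⊗ D) vec C` turns the recursion into the affine iteration
`x (n + 1) = M x n + c` with `M = (I − μ(R ⊗ I + I ⊗ R))(A ⊗ A)` (symmetry of `R` identifies
`vec (C R)` with `(R ⊗ I) vec C`). If the spectral radius of `M` is below one, Gelfand's formula
gives `M ^ n → 0`; then `1 - M` has trivial kernel, so the iteration has the fixed point
`(1 - M)⁻¹ c`, and the error `x n - (1 - M)⁻¹ c = M ^ n (x 0 - (1 - M)⁻¹ c)` tends to zero.
-/

open Matrix Kronecker Filter Topology

theorem spectralRadius_lt_one_of_forall_norm_lt_one {𝕜 A : Type*} [NormedField 𝕜]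
    [ProperSpace 𝕜] [NormedRing A] [NormedAlgebra 𝕜 A] [CompleteSpace A] {a : A}
    (h : ∀ z ∈ spectrum 𝕜 a, ‖z‖ < 1) : spectralRadius 𝕜 a < 1 := by
  rcases (spectrum 𝕜 a).eq_empty_or_nonempty with hempty | hne
  · simp [spectralRadius, hempty]
  · exact_mod_cast spectrum.spectralRadius_lt_of_forall_lt_of_nonempty hne
      (r := 1) fun z hz => mod_cast h z hz

theorem tendsto_pow_atTop_nhds_zero_of_spectralRadius_lt_one {A : Type*} [NormedRing A]
    [NormedAlgebra ℂ A] [CompleteSpace A] {a : A} (h : spectralRadius ℂ a < 1) :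
    Tendsto (a ^ ·) atTop (𝓝 0) := by
  obtain ⟨r, hρr, hr1⟩ := ENNReal.lt_iff_exists_nnreal_btwn.1 h
  have hbound : ∀ᶠ n : ℕ in atTop, ‖a ^ n‖ ≤ (r : ℝ) ^ n := by
    filter_upwards [(spectrum.gelfand_formula a).eventually_lt_const hρr, eventually_gt_atTop 0]
      with n hn hpos
    rw [one_div, ENNReal.rpow_inv_lt_iff (by positivity), ENNReal.rpow_natCast] at hn
    exact_mod_cast hn.le
  exact squeeze_zero_norm' hbound
    (tendsto_pow_atTop_nhds_zero_of_lt_one r.coe_nonneg (mod_cast hr1))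

theorem Matrix.tendsto_pow_atTop_nhds_zero_of_spectrum_map_ofReal {n : Type*} [Fintype n]
    [DecidableEq n] (M : Matrix n n ℝ) (h : ∀ z ∈ spectrum ℂ (M.map Complex.ofReal), ‖z‖ < 1) :
    Tendsto (M ^ ·) atTop (𝓝 0) := by
  -- any Banach algebra norm will do: neither the spectrum nor the topology depends on it
  let : NormedRing (Matrix n n ℂ) := Matrix.linftyOpNormedRing
  let : NormedAlgebra ℂ (Matrix n n ℂ) := Matrix.linftyOpNormedAlgebra
  have : CompleteSpace (Matrix n n ℂ) := FiniteDimensional.complete ℂ _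
  have hc := tendsto_pow_atTop_nhds_zero_of_spectralRadius_lt_one
    (spectralRadius_lt_one_of_forall_norm_lt_one h)
  have hre := ((continuous_id.matrix_map Complex.continuous_re).tendsto 0).comp hc
  have hpow (k : ℕ) : ((M.map Complex.ofReal) ^ k).map Complex.re = M ^ k := by
    rw [show M.map Complex.ofReal = M.map Complex.ofRealHom from rfl, ← Matrix.map_pow,
      Matrix.map_map]
    simp [Function.comp_def]
  simpa [Function.comp_def, hpow] using hre

theorem Matrix.isUnit_one_sub_of_tendsto_pow {K n : Type*} [Field K] [TopologicalSpace K]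
    [IsTopologicalRing K] [T2Space K] [Fintype n] [DecidableEq n] {M : Matrix n n K}
    (hM : Tendsto (M ^ ·) atTop (𝓝 0)) : IsUnit (1 - M) := by
  refine mulVec_injective_iff_isUnit.1 <|
    (injective_iff_map_eq_zero (1 - M).mulVecLin).2 fun v hv => ?_
  have hMv : M *ᵥ v = v := by
    simpa [sub_mulVec, sub_eq_zero, eq_comm] using hv
  have hfix (k : ℕ) : (M ^ k) *ᵥ v = v := by
    induction k with
    | zero => simp
    | succ k ih => rw [pow_succ, ← mulVec_mulVec, hMv, ih]
  have hlim : Tendsto (fun k => (M ^ k) *ᵥ v) atTop (𝓝 (0 *ᵥ v)) :=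
    ((continuous_id.matrix_mulVec continuous_const).tendsto 0).comp hM
  simpa [hfix] using hlim

theorem Matrix.tendsto_of_affine_recurrence {K n : Type*} [Field K] [TopologicalSpace K]
    [IsTopologicalRing K] [T2Space K] [Fintype n] [DecidableEq n] {M : Matrix n n K}
    {c : n → K} {x : ℕ → n → K} (hM : Tendsto (M ^ ·) atTop (𝓝 0))
    (hx : ∀ k, x (k + 1) = M *ᵥ x k + c) : Tendsto x atTop (𝓝 ((1 - M)⁻¹ *ᵥ c)) := by
  set y := (1 - M)⁻¹ *ᵥ c
  have hy : M *ᵥ y + c = y := by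
    have hdet := (isUnit_iff_isUnit_det _).1 (isUnit_one_sub_of_tendsto_pow hM)
    have h : (1 - M) *ᵥ y = c := by rw [mulVec_mulVec, mul_nonsing_inv _ hdet, one_mulVec]
    rw [sub_mulVec, one_mulVec] at h
    rw [← h, add_sub_cancel]
  have herr (k : ℕ) : x k - y = (M ^ k) *ᵥ (x 0 - y) := by
    induction k with
    | zero => simp
    | succ k ih =>
      rw [hx, pow_succ', ← mulVec_mulVec, ← ih, mulVec_sub]
      nth_rw 1 [← hy]
      abel
  have hlim : Tendsto (fun k => (M ^ k) *ᵥ (x 0 - y)) atTop (𝓝 (0 *ᵥ (x 0 - y))) :=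
    ((continuous_id.matrix_mulVec continuous_const).tendsto 0).comp hM
  simpa [← herr] using hlim.add_const y

theorem Matrix.tendsto_vec_iff {ι m n R : Type*} [TopologicalSpace R] {f : ι → Matrix m n R}
    {l : Filter ι} {v : n × m → R} :
    Tendsto (fun i => vec (f i)) l (𝓝 v) ↔ Tendsto f l (𝓝 (of fun i j => v (j, i))) := by
  refine ⟨fun h => tendsto_pi_nhds.2 fun i =>
      tendsto_pi_nhds.2 fun j => tendsto_pi_nhds.1 h (j, i),
    fun h => tendsto_pi_nhds.2 fun p => tendsto_pi_nhds.1 (tendsto_pi_nhds.1 h p.2) p.1⟩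

theorem vec_covariance_update {S n : Type*} [CommRing S] [Fintype n] [DecidableEq n]
    (A R C : Matrix n n S) (hR : R.IsSymm) (μ s : S) :
    vec (A * C * Aᵀ - μ • (A * C * Aᵀ * R) - μ • (R * (A * C * Aᵀ)) + s • R) =
      ((1 - μ • (R ⊗ₖ 1 + 1 ⊗ₖ R)) * (A ⊗ₖ A)) *ᵥ vec C + s • vec R := by
  rw [← mulVec_mulVec, kronecker_mulVec_vec, sub_mulVec, smul_mulVec, add_mulVec,
    kronecker_mulVec_vec, kronecker_mulVec_vec, hR.eq, transpose_one]
  simp only [Matrix.mul_one, Matrix.one_mul, one_mulVec, vec_add, vec_sub, vec_smul, smul_add]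
  abel

theorem stmt19_general {m : ℕ}
    (A R : Matrix (Fin m) (Fin m) ℝ) (hRsym : R.IsSymm)
    (μ σ : ℝ)
    (B : ℕ → Matrix (Fin m) (Fin m) ℝ)
    (hBrec : ∀ n ≥ 1, B n =
      A * B (n - 1) * Aᵀ - μ • (A * B (n - 1) * Aᵀ * R) -
        μ • (R * (A * B (n - 1) * Aᵀ)) + (μ ^ 2 * σ ^ 2) • R)
    (vec : Matrix (Fin m) (Fin m) ℝ → (Fin m × Fin m → ℝ))
    (hvec : ∀ C p, vec C p = C p.2 p.1) :
    (∀ n ≥ 1, vec (B n) =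
        ((1 - μ • (R ⊗ₖ (1 : Matrix (Fin m) (Fin m) ℝ) +
            (1 : Matrix (Fin m) (Fin m) ℝ) ⊗ₖ R)) * (A ⊗ₖ A)).mulVec
          (vec (B (n - 1))) + (μ ^ 2 * σ ^ 2) • vec R) ∧
    ((∀ z ∈ spectrum ℂ
        (((1 - μ • (R ⊗ₖ (1 : Matrix (Fin m) (Fin m) ℝ) +
            (1 : Matrix (Fin m) (Fin m) ℝ) ⊗ₖ R)) * (A ⊗ₖ A)).map
          (Complex.ofReal : ℝ → ℂ)), ‖z‖ < 1) →
      ∃ Blim : Matrix (Fin m) (Fin m) ℝ, Tendsto B atTop (𝓝 Blim)) := by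
  obtain rfl : vec = Matrix.vec := funext fun C => funext (hvec C)
  have hstep (n : ℕ) (hn : n ≥ 1) := (hBrec n hn).symm ▸ vec_covariance_update A R _ hRsym μ _
  refine ⟨hstep, fun hspec => ?_⟩
  have hlim := tendsto_of_affine_recurrence (x := fun n => vec (B n))
    (tendsto_pow_atTop_nhds_zero_of_spectrum_map_ofReal _ hspec)
    fun k => hstep (k + 1) k.succ_pos
  exact ⟨_, tendsto_vec_iff.1 hlim⟩

/-- **Vectorized covariance recursion and its convergence.** The recursion
`B_n = A B_{n−1} Aᵀ − μ A B_{n−1} Aᵀ R − μ R A B_{n−1} Aᵀ + μ²σ² R` on `m × m` matrices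
vectorizes (with column-stacking `vec`, satisfying `vec(D C Eᵀ) = (E ⊗ D) vec C`) as
`vec B_n = (I − μ(R ⊗ I + I ⊗ R))(A ⊗ A) vec B_{n−1} + μ²σ² vec R`; hence if the spectral
radius of `(I − μ(R ⊗ I + I ⊗ R))(A ⊗ A)` is `< 1`, the sequence `B_n` converges for any
initial `B₀`. -/
theorem stmt19 {m : ℕ}
    (A R : Matrix (Fin m) (Fin m) ℝ) (hRsym : R.IsSymm)
    (μ σ : ℝ) (hμ : 0 < μ) (hσ : 0 < σ)
    (B : ℕ → Matrix (Fin m) (Fin m) ℝ)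
    (hBrec : ∀ n ≥ 1, B n =
      A * B (n - 1) * Aᵀ - μ • (A * B (n - 1) * Aᵀ * R) -
        μ • (R * (A * B (n - 1) * Aᵀ)) + (μ ^ 2 * σ ^ 2) • R)
    (vec : Matrix (Fin m) (Fin m) ℝ → (Fin m × Fin m → ℝ))
    (hvec : ∀ C p, vec C p = C p.2 p.1) :
    (∀ n ≥ 1, vec (B n) =
        ((1 - μ • (R ⊗ₖ (1 : Matrix (Fin m) (Fin m) ℝ) +
            (1 : Matrix (Fin m) (Fin m) ℝ) ⊗ₖ R)) * (A ⊗ₖ A)).mulVec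
          (vec (B (n - 1))) + (μ ^ 2 * σ ^ 2) • vec R) ∧
    ((∀ z ∈ spectrum ℂ
        (((1 - μ • (R ⊗ₖ (1 : Matrix (Fin m) (Fin m) ℝ) +
            (1 : Matrix (Fin m) (Fin m) ℝ) ⊗ₖ R)) * (A ⊗ₖ A)).map
          (Complex.ofReal : ℝ → ℂ)), ‖z‖ < 1) →
      ∃ Blim : Matrix (Fin m) (Fin m) ℝ, Tendsto B atTop (𝓝 Blim)) :=
  stmt19_general A R hRsym μ σ B hBrec vec hvec
end
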